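/- Let S̃ : M₃ × ℝ³ → M₃ be continuously differentiable. Fix x₀ ∈ ℝ³, matrices A, B ∈ M₃, and vectors a, b, c ∈ ℝ³. Let F : ℝ³ × [0, T) → M₃, v : ℝ³ × [0, T) → ℝ³, and p : ℝ³ × [0, T) → ℝ³ be continuously differentiable functions such that: ∂_t F_{ij}(x,t) = ∂_j v_i(x,t) and ∂_t p_i(x,t) = Σ_j ∂_j (S̃_{ij}(F(x,t), v(x,t))) for all (x,t), with initial data F(x, 0) = A + (a·(x − x₀)) (b ⊗ a) and v(x, 0) = B(x − x₀) + c. Then ∂_t F(x₀, 0) = B and ∂_t p_i(x₀, 0) = Σ_{k,j} (∂S̃_{ij}/∂v_k)(A, c) B_{kj} + Σ_h E_{ih}(A, c; a) b_h, where E_{ih}(A, c; a) := Σ_{j,k} (∂S̃_{ij}/∂F_{hk})(A, c) a_j a_k. -/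

import Mathlib

/-!
At `t = 0` the initial data make `F(·, 0)` and `v(·, 0)` affine in `x`, with spatial derivatives
`∂_j F(·, 0) = a_j (b ⊗ a)` and `∂_j v(·, 0) = B e_j`, and `(F, v)(x₀, 0) = (A, c)`. The evolution
equations at `(x₀, 0)` turn the time rates into spatial derivatives at `x₀`: the first is read off
from `v(·, 0)`, the second is computed by the chain rule through the partial derivatives of `S̃`
at `(A, c)`, after expanding their arguments in the standard bases.
-/

open scoped RealInnerProductSpace

noncomputable section

abbrev M3 : Type := EuclideanSpace ℝ (Fin 3 × Fin 3)
abbrev R3 : Type := EuclideanSpace ℝ (Fin 3)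

section Calculus

variable {𝕜 : Type*} [NontriviallyNormedField 𝕜]
  {E F G X : Type*} [NormedAddCommGroup E] [NormedSpace 𝕜 E] [NormedAddCommGroup F]
  [NormedSpace 𝕜 F] [NormedAddCommGroup G] [NormedSpace 𝕜 G] [NormedAddCommGroup X]
  [NormedSpace 𝕜 X]

theorem fderiv_comp_prodMk_apply {S : E × F → G} {φ : X → E} {ψ : X → F} {x : X}
    (hS : DifferentiableAt 𝕜 S (φ x, ψ x)) (hφ : DifferentiableAt 𝕜 φ x)
    (hψ : DifferentiableAt 𝕜 ψ x) (u : X) :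
    fderiv 𝕜 (fun y => S (φ y, ψ y)) x u
      = fderiv 𝕜 (fun e => S (e, ψ x)) (φ x) (fderiv 𝕜 φ x u)
        + fderiv 𝕜 (fun f => S (φ x, f)) (ψ x) (fderiv 𝕜 ψ x u) := by
  have hcomp : HasFDerivAt (fun y => S (φ y, ψ y)) _ x :=
    hS.hasFDerivAt.comp x (hφ.hasFDerivAt.prodMk hψ.hasFDerivAt)
  have hleft : HasFDerivAt (fun e => S (e, ψ x)) _ (φ x) :=
    hS.hasFDerivAt.comp (φ x) (hasFDerivAt_prodMk_left (φ x) (ψ x))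
  have hright : HasFDerivAt (fun f => S (φ x, f)) _ (ψ x) :=
    hS.hasFDerivAt.comp (ψ x) (hasFDerivAt_prodMk_right (φ x) (ψ x))
  rw [hcomp.fderiv, hleft.fderiv, hright.fderiv]
  simp [← map_add]

theorem hasFDerivAt_of_forall_eq_add_apply_sub {f : E → F} {L : E →L[𝕜] F} {c : F} {x₀ : E}
    (hf : ∀ y, f y = c + L (y - x₀)) (x : E) : HasFDerivAt f L x := by
  rw [funext hf]
  exact (L.hasFDerivAt.comp x ((hasFDerivAt_id x).sub_const x₀)).const_add c

end Calculus

theorem EuclideanSpace.map_eq_sum_single {𝕜 ι M Fₗ : Type*} [RCLike 𝕜] [Fintype ι]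
    [DecidableEq ι] [AddCommMonoid M] [Module 𝕜 M] [FunLike Fₗ (EuclideanSpace 𝕜 ι) M]
    [LinearMapClass Fₗ 𝕜 (EuclideanSpace 𝕜 ι) M] (f : Fₗ) (u : EuclideanSpace 𝕜 ι) :
    f u = ∑ i, u i • f (EuclideanSpace.single i 1) := by
  conv_lhs => rw [← (EuclideanSpace.basisFun ι 𝕜).sum_repr u]
  simp [map_sum, map_smul]

section Coordinates

variable {ι κ : Type*}

def dyadic (b : EuclideanSpace ℝ ι) (a : EuclideanSpace ℝ κ) : EuclideanSpace ℝ (ι × κ) :=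
  WithLp.toLp 2 fun q => b q.1 * a q.2

variable [Fintype ι] [Fintype κ]

theorem innerSL_smulRight_dyadic_apply (a u : EuclideanSpace ℝ κ) (b : EuclideanSpace ℝ ι)
    (i : ι) (j : κ) :
    (innerSL ℝ a).smulRight (dyadic b a) u (i, j) = (∑ k, a k * u k) * (b i * a j) := by
  simp [dyadic, PiLp.inner_apply, mul_comm]

theorem map_innerSL_smulRight_dyadic_single [DecidableEq ι] [DecidableEq κ]
    (D : EuclideanSpace ℝ (ι × κ) →L[ℝ] ℝ) (a : EuclideanSpace ℝ κ) (b : EuclideanSpace ℝ ι)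
    (j : κ) :
    D ((innerSL ℝ a).smulRight (dyadic b a) (EuclideanSpace.single j 1))
      = ∑ h, ∑ k, D (EuclideanSpace.single (h, k) 1) * (a j * a k) * b h := by
  rw [EuclideanSpace.map_eq_sum_single D, Fintype.sum_prod_type]
  refine Finset.sum_congr rfl fun h _ => Finset.sum_congr rfl fun k _ => ?_
  simp [dyadic, EuclideanSpace.inner_single_right]
  ring

theorem toEuclideanCLM_of_apply [DecidableEq ι] (B : EuclideanSpace ℝ (ι × ι))
    (u : EuclideanSpace ℝ ι) (i : ι) :
    Matrix.toEuclideanCLM (𝕜 := ℝ) (Matrix.of fun i j => B (i, j)) u i = ∑ j, B (i, j) * u j :=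
  rfl

theorem map_toEuclideanCLM_single [DecidableEq ι] (D : EuclideanSpace ℝ ι →L[ℝ] ℝ)
    (M : Matrix ι ι ℝ) (j : ι) :
    D (Matrix.toEuclideanCLM (𝕜 := ℝ) M (EuclideanSpace.single j 1))
      = ∑ k, D (EuclideanSpace.single k 1) * M k j := by
  rw [EuclideanSpace.map_eq_sum_single D]
  simp [mul_comm]

end Coordinates

theorem stmt10 (T : ℝ) (hT : 0 < T)
    (St : M3 → R3 → M3)
    (hSt : ContDiff ℝ 1 (fun q : M3 × R3 => St q.1 q.2))
    (x₀ : R3) (A B : M3) (a b c : R3)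
    (F : R3 → ℝ → M3) (v : R3 → ℝ → R3) (p : R3 → ℝ → R3)
    (heqF : ∀ (x : R3), ∀ t ∈ Set.Ico (0 : ℝ) T, ∀ i j : Fin 3,
      derivWithin (fun s => F x s (i, j)) (Set.Ici 0) t
        = fderiv ℝ (fun y => v y t i) x (EuclideanSpace.single j 1))
    (heqp : ∀ (x : R3), ∀ t ∈ Set.Ico (0 : ℝ) T, ∀ i : Fin 3,
      derivWithin (fun s => p x s i) (Set.Ici 0) t
        = ∑ j, fderiv ℝ (fun y => St (F y t) (v y t) (i, j)) x (EuclideanSpace.single j 1))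
    (hF0 : ∀ (x : R3) (i j : Fin 3),
      F x 0 (i, j) = A (i, j) + (∑ k, a k * (x - x₀) k) * (b i * a j))
    (hv0 : ∀ (x : R3) (i : Fin 3),
      v x 0 i = (∑ j, B (i, j) * (x - x₀) j) + c i) :
    (∀ i j : Fin 3, derivWithin (fun s => F x₀ s (i, j)) (Set.Ici 0) 0 = B (i, j)) ∧
    (∀ i : Fin 3,
      derivWithin (fun s => p x₀ s i) (Set.Ici 0) 0
        = (∑ k, ∑ j,
            fderiv ℝ (fun u : R3 => St A u (i, j)) c (EuclideanSpace.single k 1) * B (k, j))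
          + ∑ h, (∑ j, ∑ k,
              fderiv ℝ (fun G : M3 => St G c (i, j)) A (EuclideanSpace.single (h, k) 1)
                * (a j * a k)) * b h) := by
  have h0 : (0 : ℝ) ∈ Set.Ico 0 T := ⟨le_rfl, hT⟩
  set LF : R3 →L[ℝ] M3 := (innerSL ℝ a).smulRight (dyadic b a)
  set Lv : R3 →L[ℝ] R3 := Matrix.toEuclideanCLM (𝕜 := ℝ) (Matrix.of fun i j => B (i, j))
  have hFdata : ∀ y, F y 0 = A + LF (y - x₀) := fun y => by
    ext ⟨i, j⟩
    rw [hF0, PiLp.add_apply, innerSL_smulRight_dyadic_apply]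
  have hvdata : ∀ y, v y 0 = c + Lv (y - x₀) := fun y => by
    ext i
    rw [hv0, PiLp.add_apply, toEuclideanCLM_of_apply, add_comm]
  have hFA : F x₀ 0 = A := by simpa using hFdata x₀
  have hvc : v x₀ 0 = c := by simpa using hvdata x₀
  have hDF := hasFDerivAt_of_forall_eq_add_apply_sub hFdata x₀
  have hDv := hasFDerivAt_of_forall_eq_add_apply_sub hvdata x₀
  refine ⟨fun i j => ?_, fun i => ?_⟩
  · have hDvi : HasFDerivAt (fun y => v y 0 i) (PiLp.proj 2 _ i ∘L Lv) x₀ :=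
      hasFDerivWithinAt_univ.mp ((hasFDerivWithinAt_piLp 2).mp hDv.hasFDerivWithinAt i)
    rw [heqF x₀ 0 h0, hDvi.fderiv]
    simp [Lv, toEuclideanCLM_of_apply]
  · have hS : ∀ j, DifferentiableAt ℝ (fun q : M3 × R3 => St q.1 q.2 (i, j)) (F x₀ 0, v x₀ 0) :=
      fun j => (differentiableAt_piLp 2).mp (hSt.differentiable one_ne_zero _) (i, j)
    rw [heqp x₀ 0 h0, Finset.sum_congr rfl fun j _ => fderiv_comp_prodMk_apply
      (φ := fun y => F y 0) (ψ := fun y => v y 0) (hS j) hDF.differentiableAt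
      hDv.differentiableAt (EuclideanSpace.single j (1 : ℝ))]
    simp only [hFA, hvc, hDF.fderiv, hDv.fderiv, LF, Lv, map_innerSL_smulRight_dyadic_single,
      map_toEuclideanCLM_single, Matrix.of_apply, Finset.sum_add_distrib, Finset.sum_mul]
    rw [add_comm]
    congr 1 <;> exact Finset.sum_comm
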